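/- Let u have continuous partial derivatives up to order 1 on T. Then for every 𝐪 ∈ Q_k(T)²: −(Q₀u, ∇·𝐪)_T + ⟨Q_b u, 𝐪·𝐧⟩_{∂T} = (𝐐_N(∇u), 𝐪)_T, where 𝐐_N is the componentwise L²(T)-orthogonal projection onto Q_k(T)². (Equivalently, the discrete weak gradient of the projected triple (Q₀u, Q_b u, 𝐐_g(∇u)) equals 𝐐_N(∇u).) -/

import Mathlib

open MeasureTheory Real

noncomputable section

/-- `Q_k`: real polynomials in two variables of degree at most `k` in each variable. -/
def IsQk (k : ℕ) (v : ℝ → ℝ → ℝ) : Prop :=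
  ∃ p : MvPolynomial (Fin 2) ℝ, (∀ i, p.degreeOf i ≤ k) ∧
    ∀ x y : ℝ, v x y = MvPolynomial.eval ![x, y] p

/-- `P_k`: real polynomials in one variable of degree at most `k`. -/
def IsPk (k : ℕ) (f : ℝ → ℝ) : Prop :=
  ∃ p : Polynomial ℝ, p.natDegree ≤ k ∧ ∀ x : ℝ, f x = p.eval x

/-- Partial derivative in the first variable. -/
def pd1 (w : ℝ → ℝ → ℝ) : ℝ → ℝ → ℝ := fun x y => deriv (fun t => w t y) x

/-- Partial derivative in the second variable. -/
def pd2 (w : ℝ → ℝ → ℝ) : ℝ → ℝ → ℝ := fun x y => deriv (fun t => w x t) y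

/-- Laplacian. -/
def lapl (w : ℝ → ℝ → ℝ) : ℝ → ℝ → ℝ :=
  fun x y => pd1 (pd1 w) x y + pd2 (pd2 w) x y

/-- L² inner product over the rectangle `[x0,x1] × [y0,y1]`. -/
def ipT (x0 x1 y0 y1 : ℝ) (f g : ℝ → ℝ → ℝ) : ℝ :=
  ∫ x in x0..x1, ∫ y in y0..y1, f x y * g x y

/-- Squared L² norm over the rectangle `[x0,x1] × [y0,y1]`. -/
def normSqT (x0 x1 y0 y1 : ℝ) (w : ℝ → ℝ → ℝ) : ℝ := ipT x0 x1 y0 y1 w w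

/-- Squared L² norm over the two edges parallel to the x-axis (`∂T₁`). -/
def normSqE1 (x0 x1 y0 y1 : ℝ) (w : ℝ → ℝ → ℝ) : ℝ :=
  ∫ x in x0..x1, ((w x y0) ^ 2 + (w x y1) ^ 2)

/-- Squared L² norm over the two edges parallel to the y-axis (`∂T₂`). -/
def normSqE2 (x0 x1 y0 y1 : ℝ) (w : ℝ → ℝ → ℝ) : ℝ :=
  ∫ y in y0..y1, ((w x0 y) ^ 2 + (w x1 y) ^ 2)

/-- `P` is the L²(T)-orthogonal projection of `φ` onto `Q_k(T)`. -/
def IsProjT (k : ℕ) (x0 x1 y0 y1 : ℝ) (φ P : ℝ → ℝ → ℝ) : Prop :=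
  IsQk k P ∧ ∀ q : ℝ → ℝ → ℝ, IsQk k q →
    ipT x0 x1 y0 y1 (fun x y => φ x y - P x y) q = 0

/-- `g` is the L²(e)-orthogonal projection of `f` onto `P_k(e)`, for an edge
parametrized by `[a,b]`. -/
def IsProjE (k : ℕ) (a b : ℝ) (f g : ℝ → ℝ) : Prop :=
  IsPk k g ∧ ∀ q : ℝ → ℝ, IsPk k q → (∫ x in a..b, (f x - g x) * q x) = 0

/-! Because `∇·q ∈ Q_k(T)`, `q ∈ Q_k(T)²` and the trace of `q` on each edge lies in `P_k(e)`, every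
projection in the identity can be replaced by the function it projects: `Q₀u` by `u`, `Q_b u` by
the trace of `u`, `𝐐_N(∇u)` by `∇u`. What remains is integration by parts on the rectangle,
carried out in one variable at a time, with Fubini exchanging the order of integration for the
`x`-derivative. -/

namespace MvPolynomial

theorem degreeOf_pderiv_le {σ R : Type*} [CommSemiring R] (i j : σ)
    (p : MvPolynomial σ R) : (pderiv i p).degreeOf j ≤ p.degreeOf j := by
  refine degreeOf_le_iff.mpr fun m hm => ?_
  have hm' : m + Finsupp.single i 1 ∈ p.support := by
    rw [mem_support_iff, coeff_pderiv] at hm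
    exact mem_support_iff.mpr (left_ne_zero_of_mul hm)
  exact (Nat.le_add_right _ _).trans (monomial_le_degreeOf j hm')

theorem hasDerivAt_eval_fst (p : MvPolynomial (Fin 2) ℝ) (x y : ℝ) :
    HasDerivAt (fun t => eval ![t, y] p) (eval ![x, y] (pderiv 0 p)) x := by
  induction p using MvPolynomial.induction_on with
  | C a => simpa using hasDerivAt_const x a
  | add p q hp hq => simp only [map_add]; exact hp.add hq
  | mul_X p i hp =>
    fin_cases i
    · simp only [map_mul, eval_X]
      refine (hp.mul (hasDerivAt_id' x)).congr_deriv ?_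
      simp [mul_comm, add_comm]
    · simp only [map_mul, eval_X]
      refine (hp.mul_const y).congr_deriv ?_
      simp [mul_comm]

theorem contDiff_eval_fin_two {n : WithTop ℕ∞} (p : MvPolynomial (Fin 2) ℝ) :
    ContDiff ℝ n fun z : ℝ × ℝ => eval ![z.1, z.2] p := by
  induction p using MvPolynomial.induction_on with
  | C a => simpa using contDiff_const
  | add p q hp hq => simpa only [map_add] using hp.add hq
  | mul_X p i hp =>
    fin_cases i
    · simpa using hp.mul contDiff_fst
    · simpa using hp.mul contDiff_snd

end MvPolynomial

namespace IsQk

variable {k : ℕ} {v w : ℝ → ℝ → ℝ}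

open MvPolynomial

theorem add (hv : IsQk k v) (hw : IsQk k w) : IsQk k fun x y => v x y + w x y := by
  obtain ⟨p, hp, hpv⟩ := hv
  obtain ⟨q, hq, hqw⟩ := hw
  exact ⟨p + q, fun i => (degreeOf_add_le i p q).trans (max_le (hp i) (hq i)),
    fun x y => by simp [hpv, hqw]⟩

theorem swap (hv : IsQk k v) : IsQk k (Function.swap v) := by
  obtain ⟨p, hp, hpv⟩ := hv
  refine ⟨rename (Equiv.swap 0 1) p, fun i => ?_, fun x y => ?_⟩
  · obtain ⟨j, rfl⟩ := (Equiv.swap (0 : Fin 2) 1).surjective i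
    rw [degreeOf_rename_of_injective (Equiv.injective _)]
    exact hp j
  · have hswap : ![x, y] ∘ Equiv.swap (0 : Fin 2) 1 = ![y, x] := by
      ext i
      fin_cases i <;> rfl
    rw [eval_rename, hswap, Function.swap, hpv]

theorem contDiff {n : WithTop ℕ∞} (hv : IsQk k v) : ContDiff ℝ n fun z : ℝ × ℝ => v z.1 z.2 := by
  obtain ⟨p, -, hpv⟩ := hv
  simpa only [hpv] using contDiff_eval_fin_two p

theorem continuous (hv : IsQk k v) : Continuous fun z : ℝ × ℝ => v z.1 z.2 :=
  (hv.contDiff (n := 0)).continuous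

theorem pd1 (hv : IsQk k v) : IsQk k (pd1 v) := by
  obtain ⟨p, hp, hpv⟩ := hv
  refine ⟨pderiv 0 p, fun i => (degreeOf_pderiv_le 0 i p).trans (hp i), fun x y => ?_⟩
  simp only [_root_.pd1, hpv]
  exact (hasDerivAt_eval_fst p x y).deriv

-- `pd2 v` is definitionally `swap (pd1 (swap v))`.
theorem pd2 (hv : IsQk k v) : IsQk k (pd2 v) :=
  hv.swap.pd1.swap

theorem isPk_fst (hv : IsQk k v) (y : ℝ) : IsPk k fun x => v x y := by
  obtain ⟨p, hp, hpv⟩ := hv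
  refine ⟨Polynomial.map (eval ![y]) (finSuccEquiv ℝ 1 p), ?_, fun x => ?_⟩
  · exact (Polynomial.natDegree_map_le).trans ((natDegree_finSuccEquiv p).trans_le (hp 0))
  · show v x y = _
    rw [hpv, ← eval_eq_eval_mv_eval']
    rfl

theorem isPk_snd (hv : IsQk k v) (x : ℝ) : IsPk k fun y => v x y :=
  hv.swap.isPk_fst x

end IsQk

theorem IsPk.continuous {k : ℕ} {f : ℝ → ℝ} (hf : IsPk k f) : Continuous f := by
  obtain ⟨p, -, hp⟩ := hf
  rw [funext hp]
  exact p.continuous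

section PartialDerivatives

variable {w : ℝ → ℝ → ℝ}

theorem contDiff_uncurry_swap {n : WithTop ℕ∞} (hw : ContDiff ℝ n fun z : ℝ × ℝ => w z.1 z.2) :
    ContDiff ℝ n fun z : ℝ × ℝ => Function.swap w z.1 z.2 :=
  hw.comp (contDiff_snd.prodMk contDiff_fst)

theorem pd1_eq_fderiv (hw : ContDiff ℝ 1 fun z : ℝ × ℝ => w z.1 z.2) (x y : ℝ) :
    pd1 w x y = fderiv ℝ (fun z : ℝ × ℝ => w z.1 z.2) (x, y) (1, 0) := by
  have h := (hw.differentiable one_ne_zero (x, y)).hasFDerivAt.comp_hasDerivAt x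
    ((hasDerivAt_id' x).prodMk (hasDerivAt_const x y))
  exact h.deriv

theorem hasDerivAt_pd1 (hw : ContDiff ℝ 1 fun z : ℝ × ℝ => w z.1 z.2) (x y : ℝ) :
    HasDerivAt (fun t => w t y) (pd1 w x y) x :=
  ((hw.differentiable one_ne_zero).comp (differentiable_id.prodMk (differentiable_const y))
    x).hasDerivAt

theorem continuous_pd1 (hw : ContDiff ℝ 1 fun z : ℝ × ℝ => w z.1 z.2) :
    Continuous fun z : ℝ × ℝ => pd1 w z.1 z.2 := by
  simp only [pd1_eq_fderiv hw]
  exact (hw.continuous_fderiv one_ne_zero).clm_apply continuous_const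

theorem hasDerivAt_pd2 (hw : ContDiff ℝ 1 fun z : ℝ × ℝ => w z.1 z.2) (x y : ℝ) :
    HasDerivAt (fun t => w x t) (pd2 w x y) y :=
  hasDerivAt_pd1 (contDiff_uncurry_swap hw) y x

theorem continuous_pd2 (hw : ContDiff ℝ 1 fun z : ℝ × ℝ => w z.1 z.2) :
    Continuous fun z : ℝ × ℝ => pd2 w z.1 z.2 :=
  (continuous_pd1 (contDiff_uncurry_swap hw)).comp continuous_swap

end PartialDerivatives

section RectangleIntegrals

variable {a b c d : ℝ}

theorem ipT_add_right {f g₁ g₂ : ℝ → ℝ → ℝ} (hf : Continuous fun z : ℝ × ℝ => f z.1 z.2)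
    (hg₁ : Continuous fun z : ℝ × ℝ => g₁ z.1 z.2) (hg₂ : Continuous fun z : ℝ × ℝ => g₂ z.1 z.2) :
    ipT a b c d f (fun x y => g₁ x y + g₂ x y) = ipT a b c d f g₁ + ipT a b c d f g₂ := by
  have h : ∀ x, ∫ y in c..d, f x y * (g₁ x y + g₂ x y)
      = (∫ y in c..d, f x y * g₁ x y) + ∫ y in c..d, f x y * g₂ x y := fun x => by
    simp_rw [mul_add]
    exact intervalIntegral.integral_add (Continuous.intervalIntegrable (by fun_prop) _ _)
      (Continuous.intervalIntegrable (by fun_prop) _ _)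
  simp only [ipT, h]
  exact intervalIntegral.integral_add (Continuous.intervalIntegrable (by fun_prop) _ _)
    (Continuous.intervalIntegrable (by fun_prop) _ _)

theorem ipT_sub_left {f₁ f₂ g : ℝ → ℝ → ℝ} (hf₁ : Continuous fun z : ℝ × ℝ => f₁ z.1 z.2)
    (hf₂ : Continuous fun z : ℝ × ℝ => f₂ z.1 z.2) (hg : Continuous fun z : ℝ × ℝ => g z.1 z.2) :
    ipT a b c d (fun x y => f₁ x y - f₂ x y) g = ipT a b c d f₁ g - ipT a b c d f₂ g := by
  have h : ∀ x, ∫ y in c..d, (f₁ x y - f₂ x y) * g x y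
      = (∫ y in c..d, f₁ x y * g x y) - ∫ y in c..d, f₂ x y * g x y := fun x => by
    simp_rw [sub_mul]
    exact intervalIntegral.integral_sub (Continuous.intervalIntegrable (by fun_prop) _ _)
      (Continuous.intervalIntegrable (by fun_prop) _ _)
  simp only [ipT, h]
  exact intervalIntegral.integral_sub (Continuous.intervalIntegrable (by fun_prop) _ _)
    (Continuous.intervalIntegrable (by fun_prop) _ _)

theorem ipT_swap {f g : ℝ → ℝ → ℝ} (hf : Continuous fun z : ℝ × ℝ => f z.1 z.2)
    (hg : Continuous fun z : ℝ × ℝ => g z.1 z.2) :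
    ipT a b c d f g = ipT c d a b (Function.swap f) (Function.swap g) := by
  have hK : IsCompact (Set.uIcc a b ×ˢ Set.uIcc c d) := isCompact_uIcc.prod isCompact_uIcc
  exact intervalIntegral_intervalIntegral_swap <|
    ((hf.mul hg).continuousOn.integrableOn_compact hK).mono_set
      (Set.prod_mono Set.uIoc_subset_uIcc Set.uIoc_subset_uIcc)

theorem ipT_pd2_right {u v : ℝ → ℝ → ℝ} (hu : ContDiff ℝ 1 fun z : ℝ × ℝ => u z.1 z.2)
    (hv : ContDiff ℝ 1 fun z : ℝ × ℝ => v z.1 z.2) :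
    ipT a b c d u (pd2 v) = (∫ x in a..b, u x d * v x d) - (∫ x in a..b, u x c * v x c)
      - ipT a b c d (pd2 u) v := by
  have hu₀ := hu.continuous
  have hv₀ := hv.continuous
  have hu₂ := continuous_pd2 hu
  have hv₂ := continuous_pd2 hv
  have h : ∀ x, ∫ y in c..d, u x y * pd2 v x y
      = u x d * v x d - u x c * v x c - ∫ y in c..d, pd2 u x y * v x y := fun x =>
    intervalIntegral.integral_mul_deriv_eq_deriv_mul (fun y _ => hasDerivAt_pd2 hu x y)
      (fun y _ => hasDerivAt_pd2 hv x y) (Continuous.intervalIntegrable (by fun_prop) _ _)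
      (Continuous.intervalIntegrable (by fun_prop) _ _)
  simp only [ipT, h]
  rw [intervalIntegral.integral_sub, intervalIntegral.integral_sub] <;>
    exact Continuous.intervalIntegrable (by fun_prop) _ _

theorem ipT_pd1_right {u v : ℝ → ℝ → ℝ} (hu : ContDiff ℝ 1 fun z : ℝ × ℝ => u z.1 z.2)
    (hv : ContDiff ℝ 1 fun z : ℝ × ℝ => v z.1 z.2) :
    ipT a b c d u (pd1 v) = (∫ y in c..d, u b y * v b y) - (∫ y in c..d, u a y * v a y)
      - ipT a b c d (pd1 u) v := by
  -- after exchanging the variables, `pd1` becomes `pd2` definitionally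
  rw [ipT_swap hu.continuous (continuous_pd1 hv), ipT_swap (continuous_pd1 hu) hv.continuous]
  exact ipT_pd2_right (contDiff_uncurry_swap hu) (contDiff_uncurry_swap hv)

end RectangleIntegrals

theorem IsProjT.ipT_eq {k : ℕ} {a b c d : ℝ} {φ P q : ℝ → ℝ → ℝ} (h : IsProjT k a b c d φ P)
    (hφ : Continuous fun z : ℝ × ℝ => φ z.1 z.2) (hq : IsQk k q) :
    ipT a b c d P q = ipT a b c d φ q := by
  have h₀ := h.2 q hq
  rw [ipT_sub_left hφ h.1.continuous hq.continuous, sub_eq_zero] at h₀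
  exact h₀.symm

theorem IsProjE.integral_mul_eq {k : ℕ} {a b : ℝ} {f g q : ℝ → ℝ} (h : IsProjE k a b f g)
    (hf : Continuous f) (hq : IsPk k q) :
    ∫ x in a..b, g x * q x = ∫ x in a..b, f x * q x := by
  have h₀ := h.2 q hq
  have hg := h.1.continuous
  have hq₀ := hq.continuous
  simp_rw [sub_mul] at h₀
  rw [intervalIntegral.integral_sub (Continuous.intervalIntegrable (by fun_prop) _ _)
    (Continuous.intervalIntegrable (by fun_prop) _ _), sub_eq_zero] at h₀
  exact h₀.symm

/-- `T = [x0,x1] × [y0,y1]`; `qbB`, `qbT`, `qbL`, `qbR` are `Q_b u` on the bottom, top, left and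
right edges, where `𝐪·𝐧` is `-q2`, `q2`, `-q1`, `q1`. -/
theorem statement6_general (k : ℕ) (x0 x1 y0 y1 : ℝ)
    (u : ℝ → ℝ → ℝ) (hu : ContDiff ℝ 1 (fun p : ℝ × ℝ => u p.1 p.2))
    (P0u P1 P2 : ℝ → ℝ → ℝ)
    (hP0u : IsProjT k x0 x1 y0 y1 u P0u)
    (hP1 : IsProjT k x0 x1 y0 y1 (pd1 u) P1)
    (hP2 : IsProjT k x0 x1 y0 y1 (pd2 u) P2)
    (qbB qbT qbL qbR : ℝ → ℝ)
    (hqbB : IsProjE k x0 x1 (fun x => u x y0) qbB)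
    (hqbT : IsProjE k x0 x1 (fun x => u x y1) qbT)
    (hqbL : IsProjE k y0 y1 (fun y => u x0 y) qbL)
    (hqbR : IsProjE k y0 y1 (fun y => u x1 y) qbR)
    (q1 q2 : ℝ → ℝ → ℝ) (hq1 : IsQk k q1) (hq2 : IsQk k q2) :
    -(ipT x0 x1 y0 y1 P0u (fun x y => pd1 q1 x y + pd2 q2 x y))
      + ((∫ x in x0..x1, qbB x * (-(q2 x y0)))
        + (∫ x in x0..x1, qbT x * q2 x y1)
        + (∫ y in y0..y1, qbL y * (-(q1 x0 y)))
        + (∫ y in y0..y1, qbR y * q1 x1 y))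
    = ipT x0 x1 y0 y1 P1 q1 + ipT x0 x1 y0 y1 P2 q2 := by
  have hu₀ := hu.continuous
  rw [hP0u.ipT_eq hu₀ (hq1.pd1.add hq2.pd2),
    ipT_add_right hu₀ hq1.pd1.continuous hq2.pd2.continuous,
    ipT_pd1_right hu hq1.contDiff, ipT_pd2_right hu hq2.contDiff,
    hP1.ipT_eq (continuous_pd1 hu) hq1, hP2.ipT_eq (continuous_pd2 hu) hq2]
  simp only [mul_neg, intervalIntegral.integral_neg]
  rw [hqbB.integral_mul_eq (by fun_prop) (hq2.isPk_fst y0),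
    hqbT.integral_mul_eq (by fun_prop) (hq2.isPk_fst y1),
    hqbL.integral_mul_eq (by fun_prop) (hq1.isPk_snd x0),
    hqbR.integral_mul_eq (by fun_prop) (hq1.isPk_snd x1)]
  ring

/-- the discrete weak gradient of the projected triple
`(Q₀u, Q_b u, 𝐐_g(∇u))` is `𝐐_N(∇u)`, expressed through the defining identity.
The rectangle is `T = [x0,x1] × [y0,y1]`; `(q1, q2) ∈ Q_k(T)²` and on each edge
the outward normal is used. -/
theorem statement6 (k : ℕ) (hk : 3 ≤ k) (x0 x1 y0 y1 : ℝ) (hx : x0 < x1) (hy : y0 < y1)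
    (u : ℝ → ℝ → ℝ) (hu : ContDiff ℝ 1 (fun p : ℝ × ℝ => u p.1 p.2))
    (P0u P1 P2 : ℝ → ℝ → ℝ)
    (hP0u : IsProjT k x0 x1 y0 y1 u P0u)
    (hP1 : IsProjT k x0 x1 y0 y1 (pd1 u) P1)
    (hP2 : IsProjT k x0 x1 y0 y1 (pd2 u) P2)
    (qbB qbT qbL qbR : ℝ → ℝ)
    (hqbB : IsProjE k x0 x1 (fun x => u x y0) qbB)
    (hqbT : IsProjE k x0 x1 (fun x => u x y1) qbT)
    (hqbL : IsProjE k y0 y1 (fun y => u x0 y) qbL)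
    (hqbR : IsProjE k y0 y1 (fun y => u x1 y) qbR)
    (q1 q2 : ℝ → ℝ → ℝ) (hq1 : IsQk k q1) (hq2 : IsQk k q2) :
    -(ipT x0 x1 y0 y1 P0u (fun x y => pd1 q1 x y + pd2 q2 x y))
      + ((∫ x in x0..x1, qbB x * (-(q2 x y0)))
        + (∫ x in x0..x1, qbT x * q2 x y1)
        + (∫ y in y0..y1, qbL y * (-(q1 x0 y)))
        + (∫ y in y0..y1, qbR y * q1 x1 y))
    = ipT x0 x1 y0 y1 P1 q1 + ipT x0 x1 y0 y1 P2 q2 :=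
  statement6_general k x0 x1 y0 y1 u hu P0u P1 P2 hP0u hP1 hP2 qbB qbT qbL qbR hqbB hqbT hqbL hqbR
    q1 q2 hq1 hq2
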